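/- Let b ≥ 2 be an even integer and x ∈ [0,1) a number whose binary expansion contains, for infinitely many ℓ, a block of zero digits occupying positions K_{ℓ−1}+1 through K_ℓ, where K_ℓ is strictly increasing with K_ℓ/K_{ℓ+1} → 0. Then limsup_{N→∞} (1/N) Σ_{n=1}^{N} cos(2π x b^n) = 1, and consequently the sequence (x b^n)_{n≥1} is not uniformly distributed modulo 1, so x is not normal to base b. -/

import Mathlib

open Filter

/-- A real sequence is uniformly distributed modulo 1, via Weyl's criterion. -/
def UnifDistMod1 (s : ℕ → ℝ) : Prop :=
  ∀ h : ℤ, h ≠ 0 →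
    Tendsto (fun N : ℕ => (1 / (N : ℂ)) *
      ∑ n ∈ Finset.Icc 1 N, Complex.exp (2 * Real.pi * Complex.I * h * s n))
      atTop (nhds 0)

/-- Normality to base `b` via Wall's characterization. -/
def NormalToBase (b : ℕ) (x : ℝ) : Prop :=
  UnifDistMod1 (fun n => x * (b : ℝ) ^ n)

/-!
Write `b = 2c`. If the binary digits of `x` vanish at the positions `J < k ≤ M`, then for `n ≤ M`
the number `2ⁿ x` is an integer plus a remainder at most `2ⁿ⁻ᴹ`, so `x bⁿ = 2ⁿ x · cⁿ` lies within
`bⁿ / 2ᴹ` of an integer and `cos (2π x bⁿ)` is close to `1` as long as `n ≤ N ≈ M / 2b`.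
Taking `J = K (ℓ - 1)` and `M = K ℓ` for a zero block, `J / N → 0`: all but a vanishing
proportion of the first `N` terms of the Cesàro mean of `cos (2π x bⁿ)` are close to `1`, so its
limsup is `1`. Weyl's criterion with `h = 1` would instead force the mean to tend to `0`.
-/

open Real Finset Topology

/-- The binary number `0.d(n+1) d(n+2) …`, which is `2ⁿ x` up to an integer when `x` has binary
digits `d`. -/
noncomputable def binaryTail (d : ℕ → ℕ) (n : ℕ) : ℝ :=
  ∑' k, (d (n + k + 1) : ℝ) / 2 ^ (k + 1)

section

variable {d : ℕ → ℕ}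

lemma digit_div_two_pow_le (hd : ∀ k, d k ≤ 1) (m k : ℕ) :
    (d m : ℝ) / 2 ^ (k + 1) ≤ 1 / 2 / 2 ^ k := by
  have : (d m : ℝ) ≤ 1 := by exact_mod_cast hd m
  calc (d m : ℝ) / 2 ^ (k + 1) ≤ 1 / 2 ^ (k + 1) := by gcongr
    _ = 1 / 2 / 2 ^ k := by ring

lemma summable_binaryTail (hd : ∀ k, d k ≤ 1) (n : ℕ) :
    Summable fun k => (d (n + k + 1) : ℝ) / 2 ^ (k + 1) :=
  (summable_geometric_two' 1).of_nonneg_of_le (fun _ => by positivity)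
    fun k => digit_div_two_pow_le hd _ k

lemma binaryTail_nonneg (n : ℕ) : 0 ≤ binaryTail d n :=
  tsum_nonneg fun _ => by positivity

lemma binaryTail_le_one (hd : ∀ k, d k ≤ 1) (n : ℕ) : binaryTail d n ≤ 1 :=
  calc binaryTail d n ≤ ∑' k : ℕ, (1 : ℝ) / 2 / 2 ^ k :=
        (summable_binaryTail hd n).tsum_le_tsum (fun k => digit_div_two_pow_le hd _ k)
          (summable_geometric_two' 1)
    _ = 1 := tsum_geometric_two' 1

lemma two_mul_binaryTail (hd : ∀ k, d k ≤ 1) (n : ℕ) :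
    2 * binaryTail d n = d (n + 1) + binaryTail d (n + 1) := by
  rw [binaryTail, (summable_binaryTail hd n).tsum_eq_zero_add, binaryTail, mul_add,
    ← tsum_mul_left]
  congr 1
  · simp [mul_div_cancel₀]
  · refine tsum_congr fun k => ?_
    rw [pow_succ' _ (k + 1), show n + (k + 1) + 1 = n + 1 + k + 1 by ring]
    field_simp

lemma exists_int_add_binaryTail (hd : ∀ k, d k ≤ 1) (n : ℕ) :
    ∃ A : ℤ, binaryTail d 0 * 2 ^ n = A + binaryTail d n := by
  induction n with
  | zero => exact ⟨0, by simp⟩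
  | succ n ih =>
    obtain ⟨A, hA⟩ := ih
    refine ⟨2 * A + d (n + 1), ?_⟩
    rw [pow_succ, ← mul_assoc, hA, add_mul, mul_comm (binaryTail d n), two_mul_binaryTail hd]
    push_cast
    ring

lemma binaryTail_le_of_digits_zero (hd : ∀ k, d k ≤ 1) {n j : ℕ}
    (hz : ∀ i < j, d (n + i + 1) = 0) : binaryTail d n ≤ 1 / 2 ^ j := by
  induction j generalizing n with
  | zero => simpa using binaryTail_le_one hd n
  | succ j ih =>
    have hnext : binaryTail d (n + 1) ≤ 1 / 2 ^ j :=
      ih fun i hi => by simpa [add_right_comm n 1 i, add_assoc] using hz (i + 1) (by omega)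
    have h := two_mul_binaryTail hd n
    rw [show d (n + 1) = 0 by simpa using hz 0 (by omega), Nat.cast_zero, zero_add] at h
    calc binaryTail d n = binaryTail d (n + 1) / 2 := by linarith
      _ ≤ 1 / 2 ^ j / 2 := by gcongr
      _ = 1 / 2 ^ (j + 1) := by ring

lemma one_sub_cos_two_pi_mul_le (y : ℝ) (A : ℤ) :
    1 - cos (2 * π * y) ≤ 2 * π ^ 2 * (y - A) ^ 2 := by
  have h := one_sub_sq_div_two_le_cos (x := 2 * π * (y - A))
  have hA : cos (2 * π * (y - A)) = cos (2 * π * y) := by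
    rw [show 2 * π * (y - A) = 2 * π * y + (-A : ℤ) * (2 * π) by push_cast; ring,
      cos_add_int_mul_two_pi]
  linarith

lemma sq_pow_div_two_pow_le {b n M : ℕ} (h : 2 * b * n ≤ M) :
    ((b : ℝ) ^ n / 2 ^ M) ^ 2 ≤ 1 / 2 ^ M := by
  have hb : b ^ (2 * n) ≤ 2 ^ M :=
    calc b ^ (2 * n) ≤ (2 ^ b) ^ (2 * n) := Nat.pow_le_pow_left Nat.lt_two_pow_self.le _
      _ ≤ 2 ^ M := by rw [← pow_mul]; exact Nat.pow_le_pow_right two_pos (by linarith)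
  have hb' : ((b : ℝ) ^ n) ^ 2 ≤ 2 ^ M := by rw [← pow_mul, mul_comm]; exact_mod_cast hb
  rw [div_pow, div_le_div_iff₀ (by positivity) (by positivity)]
  calc ((b : ℝ) ^ n) ^ 2 * 2 ^ M ≤ 2 ^ M * 2 ^ M := by gcongr
    _ = 1 * (2 ^ M) ^ 2 := by ring

lemma one_sub_cos_le_of_digits_zero (hd : ∀ k, d k ≤ 1) {b : ℕ} (hb : Even b) {n j : ℕ}
    (hz : ∀ i < j, d (n + i + 1) = 0) :
    1 - cos (2 * π * (binaryTail d 0 * b ^ n)) ≤ 2 * π ^ 2 * ((b : ℝ) ^ n / 2 ^ (n + j)) ^ 2 := by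
  obtain ⟨c, rfl⟩ := hb
  obtain ⟨A, hA⟩ := exists_int_add_binaryTail hd n
  have hbc : ((c + c : ℕ) : ℝ) ^ n = 2 ^ n * c ^ n := by push_cast; rw [← two_mul, mul_pow]
  have hdist : binaryTail d 0 * ((c + c : ℕ) : ℝ) ^ n - ((A * c ^ n : ℤ) : ℝ)
      = binaryTail d n * c ^ n := by
    rw [hbc, ← mul_assoc, hA]; push_cast; ring
  have htail : binaryTail d n * c ^ n ≤ ((c + c : ℕ) : ℝ) ^ n / 2 ^ (n + j) :=
    calc binaryTail d n * c ^ n ≤ 1 / 2 ^ j * c ^ n := by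
          gcongr; exact binaryTail_le_of_digits_zero hd hz
      _ = ((c + c : ℕ) : ℝ) ^ n / 2 ^ (n + j) := by rw [hbc, pow_add]; field_simp
  calc 1 - cos (2 * π * (binaryTail d 0 * ((c + c : ℕ) : ℝ) ^ n))
      ≤ 2 * π ^ 2 * (binaryTail d n * c ^ n) ^ 2 := by
        rw [← hdist]; exact one_sub_cos_two_pi_mul_le _ _
    _ ≤ _ := by gcongr; exact mul_nonneg (binaryTail_nonneg n) (by positivity)

lemma sum_Icc_ge_of_ge_on_Ioc {u : ℕ → ℝ} {J N : ℕ} {η : ℝ} (hJN : J ≤ N) (hη : 0 ≤ η)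
    (hlow : ∀ n, -1 ≤ u n) (hgood : ∀ n ∈ Ioc J N, 1 - η ≤ u n) :
    N * (1 - η) - 2 * J ≤ ∑ n ∈ Icc 1 N, u n := by
  have hbad : -(J : ℝ) ≤ ∑ n ∈ Ioc 0 J, u n := by
    simpa using card_nsmul_le_sum (Ioc 0 J) u (-1) fun n _ => hlow n
  have hrest : (N - J : ℝ) * (1 - η) ≤ ∑ n ∈ Ioc J N, u n := by
    simpa [Nat.cast_sub hJN] using card_nsmul_le_sum (Ioc J N) u (1 - η) hgood
  rw [show Icc 1 N = Ioc 0 N from Icc_add_one_left_eq_Ioc 0 N,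
    ← sum_Ioc_consecutive _ J.zero_le hJN]
  nlinarith [mul_nonneg J.cast_nonneg hη]

lemma sum_cos_ge_of_digits_zero (hd : ∀ k, d k ≤ 1) {b : ℕ} (hb : Even b) {J N M : ℕ}
    (hz : ∀ k, J < k → k ≤ M → d k = 0) (hJN : J ≤ N) (hNM : N ≤ M) (hbNM : 2 * b * N ≤ M) :
    N * (1 - 2 * π ^ 2 * (1 / 2) ^ M) - 2 * J
      ≤ ∑ n ∈ Icc 1 N, cos (2 * π * (binaryTail d 0 * b ^ n)) := by
  refine sum_Icc_ge_of_ge_on_Ioc hJN (by positivity) (fun n => neg_one_le_cos _) fun n hn => ?_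
  obtain ⟨hJn, hnN⟩ := mem_Ioc.1 hn
  have h := one_sub_cos_le_of_digits_zero hd hb (n := n) (j := M - n)
    fun i hi => hz _ (by omega) (by omega)
  rw [Nat.add_sub_cancel' (by omega)] at h
  have hsq := sq_pow_div_two_pow_le (b := b) (n := n) (M := M)
    ((Nat.mul_le_mul_left _ hnN).trans hbNM)
  rw [one_div_pow]
  nlinarith [pi_pos]

noncomputable def cosAverage (s : ℕ → ℝ) (N : ℕ) : ℝ :=
  (1 / (N : ℝ)) * ∑ n ∈ Icc 1 N, cos (2 * π * s n)

lemma cosAverage_le_one (s : ℕ → ℝ) (N : ℕ) : cosAverage s N ≤ 1 := by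
  rcases N.eq_zero_or_pos with rfl | hN
  · simp [cosAverage]
  · have hsum : ∑ n ∈ Icc 1 N, cos (2 * π * s n) ≤ N := by
      simpa using sum_le_card_nsmul (Icc 1 N) _ 1 fun n _ => cos_le_one _
    rw [cosAverage, one_div, inv_mul_le_iff₀ (by positivity), mul_one]
    exact hsum

lemma UnifDistMod1.tendsto_cosAverage {s : ℕ → ℝ} (h : UnifDistMod1 s) :
    Tendsto (cosAverage s) atTop (𝓝 0) := by
  have hre := (Complex.continuous_re.tendsto _).comp (h 1 one_ne_zero)
  rw [Complex.zero_re] at hre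
  refine hre.congr fun N => ?_
  simp only [Function.comp_apply, cosAverage]
  rw [show (1 / (N : ℂ)) = ((1 / (N : ℝ) : ℝ) : ℂ) by push_cast; ring, Complex.re_ofReal_mul,
    Complex.re_sum]
  congr 1
  refine sum_congr rfl fun n _ => ?_
  rw [show 2 * (π : ℂ) * Complex.I * ((1 : ℤ) : ℂ) * (s n : ℂ) = ((2 * π * s n : ℝ) : ℂ) * Complex.I
    by push_cast; ring, Complex.exp_ofReal_mul_I_re]

lemma limsup_eq_of_le_of_frequently {ι : Type*} {l : Filter ι} {f : ι → ℝ} {a : ℝ}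
    (hle : ∀ᶠ i in l, f i ≤ a) (hfreq : ∀ ε > 0, ∃ᶠ i in l, a - ε ≤ f i) :
    limsup f l = a :=
  le_antisymm (limsup_le_of_le (IsCoboundedUnder.of_frequently_ge (hfreq 1 one_pos)) hle)
    (le_of_forall_sub_le fun ε hε => le_limsup_of_frequently_le (hfreq ε hε) ⟨a, hle⟩)

lemma one_sub_le_cosAverage_of_digits_zero (hd : ∀ k, d k ≤ 1) {b : ℕ} (hb : 2 ≤ b)
    (hbeven : Even b) {J M : ℕ} (hz : ∀ k, J < k → k ≤ M → d k = 0) (hM : 4 * b ≤ M)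
    {ε : ℝ} (hε : 0 < ε) (hε1 : ε ≤ 1) (hJM : (J : ℝ) < ε / (16 * b) * M)
    (hsmall : 2 * π ^ 2 * (1 / 2) ^ M ≤ ε / 2) :
    1 - ε ≤ cosAverage (fun n => binaryTail d 0 * b ^ n) (M / (2 * b)) := by
  have hb0 : 0 < 2 * b := by omega
  set N := M / (2 * b)
  have hN1 : 1 ≤ N := (Nat.le_div_iff_mul_le hb0).2 (by omega)
  have hMN : (M : ℝ) ≤ 4 * b * N := by
    have hlt : M < 2 * b * (N + 1) := Nat.lt_mul_div_succ M hb0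
    exact_mod_cast (by nlinarith [Nat.mul_le_mul_left (2 * b) hN1] : M ≤ 4 * b * N)
  have hJ : (J : ℝ) ≤ ε / 4 * N :=
    calc (J : ℝ) ≤ ε / (16 * b) * M := hJM.le
      _ ≤ ε / (16 * b) * (4 * b * N) := by gcongr
      _ = ε / 4 * N := by field_simp; ring
  have hJN : J ≤ N := by
    have : (J : ℝ) ≤ N := hJ.trans (by nlinarith [(N.cast_nonneg : (0 : ℝ) ≤ N)])
    exact_mod_cast this
  have hsum := sum_cos_ge_of_digits_zero hd hbeven hz hJN (Nat.div_le_self _ _)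
    (Nat.mul_div_le M (2 * b))
  rw [cosAverage, one_div, ← div_eq_inv_mul, le_div_iff₀ (by exact_mod_cast hN1)]
  nlinarith

lemma frequently_one_sub_le_cosAverage {K : ℕ → ℕ} (hKmono : StrictMono K)
    (hKratio : Tendsto (fun ℓ => (K ℓ : ℝ) / (K (ℓ + 1) : ℝ)) atTop (𝓝 0))
    {b : ℕ} (hb : 2 ≤ b) (hbeven : Even b) (hd : ∀ k, d k ≤ 1)
    (hblocks : ∃ᶠ ℓ in atTop, ∀ k, K (ℓ - 1) < k → k ≤ K ℓ → d k = 0) {ε : ℝ} (hε : 0 < ε) :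
    ∃ᶠ N in atTop, 1 - ε ≤ cosAverage (fun n => binaryTail d 0 * b ^ n) N := by
  wlog hε1 : ε ≤ 1 generalizing ε
  · exact (this one_pos le_rfl).mono fun N hN => by linarith
  have hKtop : Tendsto K atTop atTop := hKmono.tendsto_atTop
  have hlarge : ∀ᶠ ℓ in atTop, 4 * b ≤ K ℓ := hKtop.eventually_ge_atTop _
  have hratio : ∀ᶠ ℓ in atTop, (K (ℓ - 1) : ℝ) < ε / (16 * b) * K ℓ := by
    filter_upwards [(hKratio.comp (tendsto_sub_atTop_nat 1)).eventually
      (gt_mem_nhds (show (0 : ℝ) < ε / (16 * b) by positivity)), eventually_ge_atTop 1,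
      hlarge] with ℓ h hℓ hKℓ
    rwa [Function.comp_apply, Nat.sub_add_cancel hℓ,
      div_lt_iff₀ (by exact_mod_cast (by omega : 0 < K ℓ))] at h
  have hsmall : ∀ᶠ ℓ in atTop, 2 * π ^ 2 * (1 / 2) ^ K ℓ ≤ ε / 2 := by
    have h := ((tendsto_pow_atTop_nhds_zero_of_lt_one (r := (1 / 2 : ℝ)) (by norm_num)
      (by norm_num)).const_mul (2 * π ^ 2)).comp hKtop
    rw [mul_zero] at h
    exact h.eventually (ge_mem_nhds (show (0 : ℝ) < ε / 2 by positivity))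
  exact ((Nat.tendsto_div_const_atTop (by omega)).comp hKtop).frequently_map _
    (fun ℓ ⟨hz, hKℓ, hrat, hsm⟩ =>
      one_sub_le_cosAverage_of_digits_zero hd hb hbeven hz hKℓ hε hε1 hrat hsm)
    (hblocks.and_eventually (hlarge.and (hratio.and hsmall)))

end

theorem not_normal_even_base (K : ℕ → ℕ) (hKmono : StrictMono K)
    (hKratio : Tendsto (fun ℓ => (K ℓ : ℝ) / (K (ℓ + 1) : ℝ)) atTop (nhds 0))
    (b : ℕ) (hb : 2 ≤ b) (hbeven : Even b)
    (d : ℕ → ℕ) (hd : ∀ k, d k ≤ 1)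
    (x : ℝ) (hx : x = ∑' k : ℕ, (d (k + 1) : ℝ) / 2 ^ (k + 1))
    (hblocks : ∀ L : ℕ, ∃ ℓ : ℕ, L ≤ ℓ ∧
      ∀ k : ℕ, K (ℓ - 1) + 1 ≤ k → k ≤ K ℓ → d k = 0) :
    limsup (fun N : ℕ => (1 / (N : ℝ)) *
        ∑ n ∈ Finset.Icc 1 N, Real.cos (2 * Real.pi * x * (b : ℝ) ^ n)) atTop = 1 ∧
    ¬ UnifDistMod1 (fun n => x * (b : ℝ) ^ n) ∧
    ¬ NormalToBase b x := by
  obtain rfl : x = binaryTail d 0 := by simpa [binaryTail] using hx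
  have hlim : limsup (cosAverage fun n => binaryTail d 0 * b ^ n) atTop = 1 :=
    limsup_eq_of_le_of_frequently (.of_forall (cosAverage_le_one _)) fun ε hε =>
      frequently_one_sub_le_cosAverage hKmono hKratio hb hbeven hd (frequently_atTop.2 hblocks) hε
  have hnud : ¬ UnifDistMod1 fun n => binaryTail d 0 * b ^ n := fun h =>
    one_ne_zero (hlim.symm.trans h.tendsto_cosAverage.limsup_eq)
  refine ⟨?_, hnud, hnud⟩
  convert hlim using 2
  ext N
  simp only [cosAverage, mul_assoc]
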